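/- arXiv:2110.11885 — 2 statements merged into one kernel-verified Lean document; each statement's English description precedes it below -/
import Mathlib

section
/- On a uniform grid with spacing h, if the consecutive differences of the four-point derivative approximations y'_i - y'_{i-1}, y'_{i+1} - y'_i, y'_{i+2} - y'_{i+1} all have the same sign (all ≥ 0 or all ≤ 0), then the smoothness indicators β_2 = 4(|y'_{i+1} - y'_i| - |y'_i - y'_{i-1}|)² and β_3 = 4(|y'_{i+2} - y'_{i+1}| - |y'_{i+1} - y'_i|)² are equal, with common value β_2 = β_3 = 4(d_{i+1} - 2d_i + d_{i-1})², where d_j = (y_{j+1} - y_j)/h, which equals (4/h²)(-y_{i-1} + 3y_i - 3y_{i+1} + y_{i+2})². -/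
/-- If the consecutive differences of the uniform four-point derivative approximations all
have the same sign, the fourth-order WENO smoothness indicators coincide, with common value
`4 (d₂ - 2 d₁ + d₀)² = (4/h²)(-y₀ + 3 y₁ - 3 y₂ + y₃)²`. -/
theorem stmt16 (h y0 y1 y2 y3 d0 d1 d2 yp0 yp1 yp2 yp3 : ℝ) (hh : 0 < h)
    (hd0 : d0 = (y1 - y0) / h) (hd1 : d1 = (y2 - y1) / h) (hd2 : d2 = (y3 - y2) / h)
    (hyp0 : yp0 = (1 / (6 * h)) * (-11 * y0 + 18 * y1 - 9 * y2 + 2 * y3))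
    (hyp1 : yp1 = (1 / (6 * h)) * (-2 * y0 - 3 * y1 + 6 * y2 - y3))
    (hyp2 : yp2 = (1 / (6 * h)) * (y0 - 6 * y1 + 3 * y2 + 2 * y3))
    (hyp3 : yp3 = (1 / (6 * h)) * (-2 * y0 + 9 * y1 - 18 * y2 + 11 * y3))
    (hsign : (0 ≤ yp1 - yp0 ∧ 0 ≤ yp2 - yp1 ∧ 0 ≤ yp3 - yp2) ∨
             (yp1 - yp0 ≤ 0 ∧ yp2 - yp1 ≤ 0 ∧ yp3 - yp2 ≤ 0)) :
    4 * (|yp2 - yp1| - |yp1 - yp0|) ^ 2 = 4 * (|yp3 - yp2| - |yp2 - yp1|) ^ 2 ∧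
    4 * (|yp2 - yp1| - |yp1 - yp0|) ^ 2 = 4 * (d2 - 2 * d1 + d0) ^ 2 ∧
    4 * (|yp2 - yp1| - |yp1 - yp0|) ^ 2 =
      (4 / h ^ 2) * (-y0 + 3 * y1 - 3 * y2 + y3) ^ 2 := by
  have hne : h ≠ 0 := ne_of_gt hh
  rcases hsign with ⟨h1, h2, h3⟩ | ⟨h1, h2, h3⟩
  · rw [abs_of_nonneg h1, abs_of_nonneg h2, abs_of_nonneg h3]
    subst hd0 hd1 hd2 hyp0 hyp1 hyp2 hyp3
    refine ⟨by ring, ?_, ?_⟩ <;> field_simp <;> ring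
  · rw [abs_of_nonpos h1, abs_of_nonpos h2, abs_of_nonpos h3]
    subst hd0 hd1 hd2 hyp0 hyp1 hyp2 hyp3
    refine ⟨by ring, ?_, ?_⟩ <;> field_simp <;> ring
end

section
/- For distinct nodes x_{i-1} < x_i < x_{i+1} < x_{i+2}, the cubic Lagrange interpolant p(x) of data (x_j, y_j) equals γ_2(x) q_2(x) + γ_3(x) q_3(x) + γ_4(x) q_4(x), where q_2, q_3, q_4 are the linear interpolants on {x_{i-1}, x_i}, {x_i, x_{i+1}}, {x_{i+1}, x_{i+2}} respectively, and γ_2, γ_3, γ_4 are as defined. -/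
open Polynomial

theorem Polynomial.eval_eq_of_degree_le_three {R : Type*} [Semiring R] {p : R[X]}
    (hdeg : p.degree ≤ 3) (t : R) :
    p.eval t = p.coeff 0 + p.coeff 1 * t + p.coeff 2 * t ^ 2 + p.coeff 3 * t ^ 3 := by
  rw [eval_eq_sum_range' (Nat.lt_succ_of_le (natDegree_le_of_degree_le hdeg))]
  simp [Finset.sum_range_succ]

theorem cubic_eq_weighted_linear_interpolants {K : Type*} [Field K] {x0 x1 x2 x3 : K}
    (h10 : x1 - x0 ≠ 0) (h20 : x2 - x0 ≠ 0) (h30 : x3 - x0 ≠ 0)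
    (h21 : x2 - x1 ≠ 0) (h31 : x3 - x1 ≠ 0) (h32 : x3 - x2 ≠ 0) (f : K → K)
    (hf : ∃ a b c d : K, ∀ s, f s = a + b * s + c * s ^ 2 + d * s ^ 3) (t : K) :
    f t =
      ((t - x2) * (t - x3) / ((x2 - x0) * (x3 - x0))) *
        ((-f x0 * (t - x1) + f x1 * (t - x0)) / (x1 - x0)) +
      (-((t - x0) * (t - x3) / (x3 - x0)) * (1 / (x2 - x0) + 1 / (x3 - x1))) *
        ((-f x1 * (t - x2) + f x2 * (t - x1)) / (x2 - x1)) +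
      ((t - x0) * (t - x1) / ((x3 - x0) * (x3 - x1))) *
        ((-f x2 * (t - x3) + f x3 * (t - x2)) / (x3 - x2)) := by
  obtain ⟨a, b, c, d, hf⟩ := hf
  simp only [hf]
  field_simp
  ring

/-- The cubic Lagrange interpolant on four points equals the combination
`γ₂ q₂ + γ₃ q₃ + γ₄ q₄` of the three linear interpolants on the two-point substencils. -/
theorem stmt18 (x0 x1 x2 x3 y0 y1 y2 y3 : ℝ)
    (h01 : x0 < x1) (h12 : x1 < x2) (h23 : x2 < x3)
    (p : Polynomial ℝ) (hdeg : p.degree ≤ 3)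
    (hp0 : p.eval x0 = y0) (hp1 : p.eval x1 = y1)
    (hp2 : p.eval x2 = y2) (hp3 : p.eval x3 = y3) :
    ∀ t : ℝ, p.eval t =
      ((t - x2) * (t - x3) / ((x2 - x0) * (x3 - x0))) *
        ((-y0 * (t - x1) + y1 * (t - x0)) / (x1 - x0)) +
      (-((t - x0) * (t - x3) / (x3 - x0)) * (1 / (x2 - x0) + 1 / (x3 - x1))) *
        ((-y1 * (t - x2) + y2 * (t - x1)) / (x2 - x1)) +
      ((t - x0) * (t - x1) / ((x3 - x0) * (x3 - x1))) *
        ((-y2 * (t - x3) + y3 * (t - x2)) / (x3 - x2)) := by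
  subst hp0 hp1 hp2 hp3
  exact cubic_eq_weighted_linear_interpolants (by linarith) (by linarith) (by linarith)
    (by linarith) (by linarith) (by linarith) p.eval
    ⟨_, _, _, _, eval_eq_of_degree_le_three hdeg⟩
end
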